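/- (Key estimate of Lemma 3.9) Let ℓ and θ be real numbers with 0 < ℓ < W((2+√3)/2) and |θ| > (3π²)^{1/4} · √ℓ. Then 2|θ| (cosh(r₀(ℓ)) − cosh(r₀(ℓ)/2)) > |θ| cosh(r₀(ℓ)) > π ℓ sinh(2 r₀(ℓ)); in particular, the area lower bound 2|θ|(cosh(r₀) − cosh(r₀/2)) for any incompressible piece of a least-area surface entering the half-radius tube strictly exceeds the area π ℓ sinh(2r₀) of the boundary torus of the maximal solid tube. -/

import Mathlib

/-- Inverse hyperbolic cosine: `arcosh y = log (y + √(y² - 1))` for `y ≥ 1`. -/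
noncomputable def arcosh (y : ℝ) : ℝ := Real.log (y + Real.sqrt (y ^ 2 - 1))

/-- The function `W` from the paper. -/
noncomputable def W (x : ℝ) : ℝ :=
  (Real.sqrt 3 / (4 * Real.pi)) *
    (arcosh (1 + 1 / (1 + Real.sqrt (1 + (8 * x ^ 2 - 8 * x + 1) ^ 2)))) ^ 2

/-- The function `κ(ℓ) = cosh(√(4πℓ/√3)) - 1`. -/
noncomputable def κ (ℓ : ℝ) : ℝ :=
  Real.cosh (Real.sqrt (4 * Real.pi * ℓ / Real.sqrt 3)) - 1

/-- The tube radius `r₀(ℓ)`, the positive real with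
`cosh²(r₀(ℓ)) = (1/2)(√(1 - 2κ(ℓ))/κ(ℓ) + 1)`. -/
noncomputable def r₀ (ℓ : ℝ) : ℝ :=
  arcosh (Real.sqrt ((1 / 2) * (Real.sqrt (1 - 2 * κ ℓ) / κ ℓ + 1)))

/-! With `t = √(4πℓ/√3)` one has `κ ℓ = cosh t - 1 > t² / 2 = 2πℓ/√3`. For `A = 7 + 4√3` the
bound `ℓ < W((2 + √3)/2)` says `κ ℓ < 1 / (1 + √(1 + A²))`, i.e. `A κ < √(1 - 2κ)`, so the
equation for `r` gives `cosh² r > (A + 1)/2 = (1 + √3)²`. As `cosh r = 2 cosh² (r/2) - 1`, this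
forces `cosh (r/2)` above `(1 + √3)/2`, the positive root of `2c² - 2c - 1`, which is the first
inequality. For the second, the equation for `r` gives `2κ sinh² r ≤ 1 - κ < 1`, hence
`(2πℓ sinh r)² < √3 πℓ < θ²`, and `sinh (2r) = 2 sinh r cosh r`. -/

open Real hiding arcosh

theorem arcosh_eq_real_arcosh : arcosh = Real.arcosh := rfl

theorem sq_div_two_lt_cosh_sub_one {t : ℝ} (ht : t ≠ 0) : t ^ 2 / 2 < cosh t - 1 := by
  have hsinh : |t| / 2 < sinh (|t| / 2) := self_lt_sinh_iff.mpr (by positivity)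
  have hcosh := cosh_two_mul (|t| / 2)
  rw [mul_div_cancel₀ _ two_ne_zero, cosh_sq] at hcosh
  have hsq := pow_lt_pow_left₀ hsinh (by positivity) two_ne_zero
  rw [← cosh_abs, hcosh, ← sq_abs t]
  linarith [div_pow |t| 2 2]

theorem mul_lt_sqrt_one_sub_two_mul {A k : ℝ} (hk : 0 ≤ k)
    (h : k * (1 + √(1 + A ^ 2)) < 1) : A * k < √(1 - 2 * k) := by
  set s := √(1 + A ^ 2)
  have hs : s ^ 2 = 1 + A ^ 2 := sq_sqrt (by positivity)
  have hs1 : 1 ≤ s := one_le_sqrt.mpr (by nlinarith)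
  have hfactor : 1 - 2 * k - (A * k) ^ 2 = (1 - (s + 1) * k) * (1 + (s - 1) * k) := by
    linear_combination k ^ 2 * hs
  refine lt_sqrt_of_sq_lt ?_
  nlinarith [mul_pos (by linarith : 0 < 1 - (s + 1) * k) (by nlinarith : 0 < 1 + (s - 1) * k)]

theorem two_mul_cosh_half_lt_cosh {r : ℝ} (h : 1 + √3 < cosh r) : 2 * cosh (r / 2) < cosh r := by
  have h3 : √3 ^ 2 = 3 := sq_sqrt (by norm_num)
  have hhalf := cosh_two_mul (r / 2)
  rw [mul_div_cancel₀ _ two_ne_zero, sinh_sq] at hhalf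
  have hc := one_le_cosh (r / 2)
  nlinarith [sqrt_nonneg 3]

theorem two_mul_mul_sinh_sq_le_one_sub {k r : ℝ} (hk : 0 < k)
    (h : cosh r ^ 2 = (1 / 2) * (√(1 - 2 * k) / k + 1)) : 2 * k * sinh r ^ 2 ≤ 1 - k := by
  have hsqrt : √(1 - 2 * k) ≤ 1 := sqrt_le_one.mpr (by linarith)
  have : 2 * k * cosh r ^ 2 = √(1 - 2 * k) + k := by rw [h]; field_simp
  rw [sinh_sq]; linarith

theorem sq_rpow_one_div_four_mul_sqrt {a b : ℝ} (ha : 0 ≤ a) (hb : 0 ≤ b) :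
    (a ^ (1 / 4 : ℝ) * √b) ^ 2 = √a * b := by
  rw [mul_pow, sq_sqrt hb, ← rpow_natCast, ← rpow_mul ha, sqrt_eq_rpow]
  norm_num

theorem κ_lt_of_lt_mul_arcosh_sq {ℓ y : ℝ} (hy : 1 < y)
    (h : ℓ < √3 / (4 * π) * arcosh y ^ 2) : κ ℓ < y - 1 := by
  rw [arcosh_eq_real_arcosh] at h
  have ha := Real.arcosh_pos hy
  have hlt : √(4 * π * ℓ / √3) < Real.arcosh y := by
    rw [sqrt_lt' ha, div_lt_iff₀ (by positivity)]
    rw [div_mul_eq_mul_div, lt_div_iff₀ (by positivity)] at h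
    linarith
  have := cosh_lt_cosh.mpr (show |√(4 * π * ℓ / √3)| < |Real.arcosh y| by
    rwa [abs_of_nonneg (sqrt_nonneg _), abs_of_pos ha])
  rw [κ, ← Real.cosh_arcosh hy.le]
  linarith

theorem W_two_add_sqrt_three_div_two :
    W ((2 + √3) / 2) = √3 / (4 * π) * arcosh (1 + 1 / (1 + √(1 + (7 + 4 * √3) ^ 2))) ^ 2 := by
  have h3 : √3 ^ 2 = 3 := sq_sqrt (by norm_num)
  rw [W, show 8 * ((2 + √3) / 2) ^ 2 - 8 * ((2 + √3) / 2) + 1 = 7 + 4 * √3 by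
    linear_combination 2 * h3]

theorem two_mul_pi_mul_div_sqrt_three_lt_κ {ℓ : ℝ} (hℓ : 0 < ℓ) : 2 * π * ℓ / √3 < κ ℓ := by
  have harg : 0 < 4 * π * ℓ / √3 := by positivity
  have := sq_div_two_lt_cosh_sub_one (sqrt_pos.mpr harg).ne'
  rw [sq_sqrt harg.le] at this
  rw [κ]; linarith [show 4 * π * ℓ / √3 / 2 = 2 * π * ℓ / √3 by ring]

theorem κ_pos {ℓ : ℝ} (hℓ : 0 < ℓ) : 0 < κ ℓ :=
  lt_trans (by positivity) (two_mul_pi_mul_div_sqrt_three_lt_κ hℓ)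

theorem one_add_sqrt_three_lt_cosh_of_lt_W {ℓ r : ℝ} (h0 : 0 < ℓ) (h1 : ℓ < W ((2 + √3) / 2))
    (hcosh : cosh r ^ 2 = (1 / 2) * (√(1 - 2 * κ ℓ) / κ ℓ + 1)) : 1 + √3 < cosh r := by
  have h3 : √3 ^ 2 = 3 := sq_sqrt (by norm_num)
  set s := √(1 + (7 + 4 * √3) ^ 2)
  have hκ := κ_pos h0
  have hy : 1 < 1 + 1 / (1 + s) := lt_add_of_pos_right 1 (by positivity)
  rw [W_two_add_sqrt_three_div_two] at h1
  have hκs : κ ℓ * (1 + s) < 1 := by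
    rw [← lt_div_iff₀ (by positivity)]
    linarith [κ_lt_of_lt_mul_arcosh_sq hy h1]
  have hA : 7 + 4 * √3 < √(1 - 2 * κ ℓ) / κ ℓ :=
    (lt_div_iff₀ hκ).mpr (mul_lt_sqrt_one_sub_two_mul hκ.le hκs)
  have hsq : (1 + √3) ^ 2 < cosh r ^ 2 := by rw [hcosh]; linarith
  exact lt_of_pow_lt_pow_left₀ 2 (cosh_pos r).le hsq

theorem two_mul_pi_mul_mul_sinh_lt_abs {ℓ θ r : ℝ} (h0 : 0 < ℓ)
    (hθ : |θ| > (3 * π ^ 2) ^ ((1 : ℝ) / 4) * √ℓ)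
    (hcosh : cosh r ^ 2 = (1 / 2) * (√(1 - 2 * κ ℓ) / κ ℓ + 1)) :
    2 * π * ℓ * sinh r < |θ| := by
  have hκ := κ_pos h0
  have hsinh := two_mul_mul_sinh_sq_le_one_sub hκ hcosh
  have hκ' := two_mul_pi_mul_div_sqrt_three_lt_κ h0
  have hsinh' : sinh r ^ 2 * (4 * π * ℓ / √3) < 1 :=
    calc sinh r ^ 2 * (4 * π * ℓ / √3) = 2 * sinh r ^ 2 * (2 * π * ℓ / √3) := by ring
      _ ≤ 2 * sinh r ^ 2 * κ ℓ := by gcongr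
      _ ≤ 1 - κ ℓ := by linarith
      _ < 1 := by linarith
  rw [← mul_div_assoc, div_lt_one (by positivity)] at hsinh'
  have hθ2 : √3 * π * ℓ < θ ^ 2 := by
    have := pow_lt_pow_left₀ hθ (by positivity) two_ne_zero
    rwa [sq_rpow_one_div_four_mul_sqrt (by positivity) h0.le, sqrt_mul (by norm_num),
      sqrt_sq pi_pos.le, sq_abs] at this
  have hsq : (2 * π * ℓ * sinh r) ^ 2 < θ ^ 2 := by
    calc (2 * π * ℓ * sinh r) ^ 2 = π * ℓ * (sinh r ^ 2 * (4 * π * ℓ)) := by ring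
      _ < π * ℓ * √3 := mul_lt_mul_of_pos_left hsinh' (by positivity)
      _ = √3 * π * ℓ := by ring
      _ < θ ^ 2 := hθ2
  exact (le_abs_self _).trans_lt (sq_lt_sq.mp hsq)

theorem key_separation_estimate_general (ℓ θ : ℝ) (h0 : 0 < ℓ)
    (h1 : ℓ < W ((2 + Real.sqrt 3) / 2))
    (hθ : |θ| > (3 * Real.pi ^ 2) ^ ((1 : ℝ) / 4) * Real.sqrt ℓ)
    (r : ℝ)
    (hcosh : (Real.cosh r) ^ 2 = (1 / 2) * (Real.sqrt (1 - 2 * κ ℓ) / κ ℓ + 1)) :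
    2 * |θ| * (Real.cosh r - Real.cosh (r / 2)) > |θ| * Real.cosh r ∧
    |θ| * Real.cosh r > Real.pi * ℓ * Real.sinh (2 * r) := by
  have hθpos : 0 < |θ| := lt_of_le_of_lt (by positivity) hθ
  have hhalf := two_mul_cosh_half_lt_cosh (one_add_sqrt_three_lt_cosh_of_lt_W h0 h1 hcosh)
  have hsinh := two_mul_pi_mul_mul_sinh_lt_abs h0 hθ hcosh
  constructor
  · linarith [mul_lt_mul_of_pos_left hhalf hθpos]
  · rw [sinh_two_mul]
    linarith [mul_lt_mul_of_pos_right hsinh (cosh_pos r)]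

theorem key_separation_estimate (ℓ θ : ℝ) (h0 : 0 < ℓ)
    (h1 : ℓ < W ((2 + Real.sqrt 3) / 2))
    (hθ : |θ| > (3 * Real.pi ^ 2) ^ ((1 : ℝ) / 4) * Real.sqrt ℓ)
    (r : ℝ) (hr : 0 < r)
    (hcosh : (Real.cosh r) ^ 2 = (1 / 2) * (Real.sqrt (1 - 2 * κ ℓ) / κ ℓ + 1)) :
    2 * |θ| * (Real.cosh r - Real.cosh (r / 2)) > |θ| * Real.cosh r ∧
    |θ| * Real.cosh r > Real.pi * ℓ * Real.sinh (2 * r) :=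
  key_separation_estimate_general ℓ θ h0 h1 hθ r hcosh
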